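/- Let F_1,…,F_s be distinct (k+1)-element subsets of [n] and 𝕂 a field. Then F_1,…,F_s is a shelling order of the pure k-dimensional simplicial complex with facets F_1,…,F_s if and only if the ideal ⟨x_{[n]\F_1}, x_{[n]\F_2}, …, x_{[n]\F_s}⟩ ⊆ 𝕂[x_1,…,x_n] has linear quotients with respect to this given ordering of generators. -/
import Mathlib

open Finset MvPolynomial

/-- `F 0, F 1, …` is a shelling order: for all `i < j` there are `ℓ < j` and `v ∈ F j`
with `F i ∩ F j ⊆ F ℓ ∩ F j = F j \ {v}`. -/
def IsShellingOrder (n s : ℕ) (F : Fin s → Finset (Fin n)) : Prop :=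
  ∀ j i : Fin s, i < j → ∃ ℓ : Fin s, ℓ < j ∧ ∃ v ∈ F j,
    F i ∩ F j ⊆ F ℓ ∩ F j ∧ F ℓ ∩ F j = (F j).erase v

/-- The squarefree monomial `x_e = ∏_{i ∈ e} x_i`. -/
noncomputable def xMon (𝕂 : Type) [Field 𝕂] (n : ℕ) (e : Finset (Fin n)) :
    MvPolynomial (Fin n) 𝕂 :=
  ∏ i ∈ e, X i

/-- An ideal is generated by a subset of the variables `{x_1,…,x_n}`. -/
def GeneratedByVariables (𝕂 : Type) [Field 𝕂] (n : ℕ) (I : Ideal (MvPolynomial (Fin n) 𝕂)) :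
    Prop :=
  ∃ S : Set (Fin n), I = Ideal.span ((fun i => (X i : MvPolynomial (Fin n) 𝕂)) '' S)

/-- The exponent vector of the squarefree monomial supported on `e`. -/
noncomputable def deg {n : ℕ} (e : Finset (Fin n)) : Fin n →₀ ℕ :=
  ∑ i ∈ e, Finsupp.single i 1

lemma deg_apply {n : ℕ} (e : Finset (Fin n)) (v : Fin n) :
    deg e v = if v ∈ e then 1 else 0 := by
  classical
  simp [deg, Finsupp.finset_sum_apply, Finsupp.single_apply, Finset.sum_ite_eq]

lemma xMon_eq (𝕂 : Type) [Field 𝕂] (n : ℕ) (e : Finset (Fin n)) :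
    xMon 𝕂 n e = monomial (deg e) (1 : 𝕂) := by
  classical
  induction e using Finset.induction with
  | empty => simp [xMon, deg]
  | @insert a e h ih =>
    have hd : deg (insert a e) = Finsupp.single a 1 + deg e := Finset.sum_insert h
    rw [xMon, Finset.prod_insert h, ← xMon, ih, hd, X, monomial_mul, one_mul]

lemma mem_span_xMon {𝕂 : Type} [Field 𝕂] {n s : ℕ} (F : Fin s → Finset (Fin n)) (j : Fin s)
    (f : MvPolynomial (Fin n) 𝕂) :
    f ∈ Ideal.span ((fun i => xMon 𝕂 n (Finset.univ \ F i)) '' {i : Fin s | i < j}) ↔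
      ∀ c ∈ f.support, ∃ i : Fin s, i < j ∧ deg (Finset.univ \ F i) ≤ c := by
  have himg : (fun i => xMon 𝕂 n (Finset.univ \ F i)) '' {i : Fin s | i < j}
      = (fun d => monomial d (1:𝕂)) ''
        ((fun i : Fin s => deg (Finset.univ \ F i)) '' {i : Fin s | i < j}) := by
    rw [Set.image_image]; exact Set.image_congr fun i _ => xMon_eq 𝕂 n _
  rw [himg, mem_ideal_span_monomial_image]
  constructor <;> intro H c hc
  · obtain ⟨si, ⟨i, hi, rfl⟩, hle⟩ := H c hc; exact ⟨i, hi, hle⟩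
  · obtain ⟨i, hi, hle⟩ := H c hc; exact ⟨_, ⟨i, hi, rfl⟩, hle⟩

/-- `F_1,…,F_s` is a shelling order of the pure `k`-dimensional complex with
facets `F_1,…,F_s` iff the ideal `⟨x_{[n]\F_1},…,x_{[n]\F_s}⟩` has linear quotients with
respect to this ordering. -/
theorem shelling_iff_linear_quotients (n s k : ℕ) (𝕂 : Type) [Field 𝕂]
    (F : Fin s → Finset (Fin n)) (hinj : Function.Injective F)
    (hcard : ∀ i, (F i).card = k + 1) :
    IsShellingOrder n s F ↔
      ∀ j : Fin s, GeneratedByVariables 𝕂 n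
        (Submodule.colon
          (Ideal.span ((fun i => xMon 𝕂 n (Finset.univ \ F i)) '' {i : Fin s | i < j}))
          (Ideal.span {xMon 𝕂 n (Finset.univ \ F j)})) := by
  classical
  constructor
  · intro hShell j
    refine ⟨{v | v ∈ F j ∧ ∃ ℓ, ℓ < j ∧ F ℓ ∩ F j = (F j).erase v}, ?_⟩
    apply le_antisymm
    · intro f hf
      rw [Ideal.mem_colon_span_singleton, mem_span_xMon, xMon_eq] at hf
      rw [mem_ideal_span_X_image]
      intro c hc
      have hc' : c + deg (Finset.univ \ F j) ∈
          (f * monomial (deg (Finset.univ \ F j)) (1:𝕂)).support := by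
        rw [mem_support_iff, coeff_mul_monomial, mul_one]
        exact mem_support_iff.mp hc
      obtain ⟨i, hij, hle⟩ := hf _ hc'
      obtain ⟨ℓ, hℓ, v, hvF, hsub, heq⟩ := hShell j i hij
      refine ⟨v, ⟨hvF, ℓ, hℓ, heq⟩, ?_⟩
      have hvi : v ∉ F i := fun hvi =>
        (Finset.notMem_erase v (F j)) (heq ▸ hsub (Finset.mem_inter.mpr ⟨hvi, hvF⟩))
      have hv := (Finsupp.le_def.mp hle) v
      rw [Finsupp.add_apply, deg_apply, deg_apply,
        if_pos (Finset.mem_sdiff.mpr ⟨Finset.mem_univ _, hvi⟩),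
        if_neg (by simp [hvF])] at hv
      omega
    · rw [Ideal.span_le]
      rintro _ ⟨v, ⟨hvF, ℓ, hℓ, heq⟩, rfl⟩
      simp only [SetLike.mem_coe]
      rw [Ideal.mem_colon_span_singleton, xMon_eq, X, monomial_mul, one_mul, mem_span_xMon]
      intro c hc
      rw [support_monomial, if_neg one_ne_zero, Finset.mem_singleton] at hc
      subst hc
      have key : ∀ w, w ∉ F ℓ → (w = v ∨ w ∉ F j) := by
        intro w hw
        by_cases hwv : w = v
        · exact Or.inl hwv
        · refine Or.inr fun hwj => hw ?_
          have : w ∈ F ℓ ∩ F j := heq.symm ▸ Finset.mem_erase.mpr ⟨hwv, hwj⟩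
          exact (Finset.mem_inter.mp this).1
      refine ⟨ℓ, hℓ, Finsupp.le_def.mpr fun w => ?_⟩
      rw [Finsupp.add_apply, deg_apply, deg_apply, Finsupp.single_apply]
      by_cases h1 : w ∈ Finset.univ \ F ℓ
      · have hw : w ∉ F ℓ := (Finset.mem_sdiff.mp h1).2
        rcases key w hw with rfl | hwj
        · rw [if_pos h1, if_pos rfl]; omega
        · rw [if_pos h1]
          rw [if_pos (Finset.mem_sdiff.mpr ⟨Finset.mem_univ _, hwj⟩)]
          omega
      · rw [if_neg h1]; omega
  · intro h j i hij
    obtain ⟨S, hS⟩ := h j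
    have h1 : (monomial (deg (F j \ F i)) (1:𝕂)) ∈
        Ideal.span ((fun v => (X v : MvPolynomial (Fin n) 𝕂)) '' S) := by
      rw [← hS, Ideal.mem_colon_span_singleton, xMon_eq, monomial_mul, one_mul, mem_span_xMon]
      intro c hc
      rw [support_monomial, if_neg one_ne_zero, Finset.mem_singleton] at hc
      subst hc
      refine ⟨i, hij, Finsupp.le_def.mpr fun w => ?_⟩
      rw [Finsupp.add_apply, deg_apply, deg_apply, deg_apply]
      by_cases hw : w ∈ Finset.univ \ F i
      · have hwi : w ∉ F i := (Finset.mem_sdiff.mp hw).2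
        by_cases hwj : w ∈ F j
        · rw [if_pos hw, if_pos (Finset.mem_sdiff.mpr ⟨hwj, hwi⟩)]; omega
        · rw [if_pos hw]
          rw [if_pos (Finset.mem_sdiff.mpr ⟨Finset.mem_univ _, hwj⟩)]
          omega
      · rw [if_neg hw]; omega
    rw [mem_ideal_span_X_image] at h1
    obtain ⟨v, hvS, hv⟩ := h1 (deg (F j \ F i))
      (by rw [support_monomial, if_neg one_ne_zero]; exact Finset.mem_singleton_self _)
    rw [deg_apply] at hv
    have hvmem : v ∈ F j \ F i := by
      by_contra hc; rw [if_neg hc] at hv; exact hv rfl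
    obtain ⟨hvj, hvi⟩ := Finset.mem_sdiff.mp hvmem
    have h2 : (X v : MvPolynomial (Fin n) 𝕂) ∈
        Ideal.span ((fun w => (X w : MvPolynomial (Fin n) 𝕂)) '' S) :=
      Ideal.subset_span ⟨v, hvS, rfl⟩
    rw [← hS, Ideal.mem_colon_span_singleton, xMon_eq, X, monomial_mul, one_mul,
      mem_span_xMon] at h2
    obtain ⟨ℓ, hℓ, hle⟩ := h2 _
      (by rw [support_monomial, if_neg one_ne_zero]; exact Finset.mem_singleton_self _)
    have hsub : (F j).erase v ⊆ F ℓ := by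
      intro w hw
      obtain ⟨hwv, hwj⟩ := Finset.mem_erase.mp hw
      by_contra hwℓ
      have hle' := Finsupp.le_def.mp hle w
      rw [Finsupp.add_apply, deg_apply, Finsupp.single_apply, deg_apply,
        if_pos (Finset.mem_sdiff.mpr ⟨Finset.mem_univ _, hwℓ⟩),
        if_neg (fun hh => hwv hh.symm), if_neg (by simp [hwj])] at hle'
      omega
    have hcap : F ℓ ∩ F j = (F j).erase v := by
      have hss : (F j).erase v ⊆ F ℓ ∩ F j := fun w hw =>
        Finset.mem_inter.mpr ⟨hsub hw, (Finset.mem_erase.mp hw).2⟩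
      refine (Finset.eq_of_subset_of_card_le hss ?_).symm
      have hne : F ℓ ∩ F j ≠ F j := by
        intro hh
        have hsub' : F j ⊆ F ℓ := by
          rw [← hh]; exact Finset.inter_subset_left
        have hEq : F j = F ℓ := Finset.eq_of_subset_of_card_le hsub'
          (by rw [hcard ℓ, hcard j])
        exact absurd (hinj hEq.symm) (ne_of_lt hℓ)
      have hlt : (F ℓ ∩ F j).card < (F j).card :=
        Finset.card_lt_card (Finset.ssubset_iff_subset_ne.mpr
          ⟨Finset.inter_subset_right, hne⟩)
      rw [Finset.card_erase_of_mem hvj]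
      have := hcard j
      omega
    refine ⟨ℓ, hℓ, v, hvj, ?_, hcap⟩
    intro w hw
    obtain ⟨hwi, hwj⟩ := Finset.mem_inter.mp hw
    rw [hcap]
    exact Finset.mem_erase.mpr ⟨fun hh => hvi (hh ▸ hwi), hwj⟩
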